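/- Let f be a homogeneous Boolean function of degree r in n variables with 1 ≤ r ≤ n-1 and let a ∈ F_2^n be nonzero. Then the linear hyperplane {x ∈ F_2^n : a·x = 0} is a degree-drop hyperplane for f if and only if a is a fast point for the complement f^c. Consequently, the number of degree-drop linear hyperplanes of f equals the number of fast points of f^c. -/

import Mathlib

/-!
Write `f = ∑ c_S x^S` and pick `j` with `a j = 1`. Parametrizing the hyperplane `a · x = 0` by
solving for `x_j`, the coefficient of a degree-`r` monomial `x^S` of the restriction equals
`∑_{i ∈ W} a_i c_{W \ i}` with `W = S ∪ {j}`, i.e. the coefficient of `x^W` in `(a · x) f`.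
So the hyperplane is a degree-drop hyperplane iff these sums vanish for all `(r+1)`-sets
`W ∋ j`, and since `(a · x)² = a · x` (cross terms cancel in pairs) iff they vanish for all
`(r+1)`-sets `W`. On the other side, the coefficient of `x^V`, `|V| = n - r - 1`, in `D_a f^c`
is `∑_{i ∉ V} a_i c_{Vᶜ \ i}`, the same sum for `W = Vᶜ`, and all higher coefficients
vanish.
-/

open Finset

/-- A Boolean function in `n` variables. -/
abbrev BF (n : ℕ) := (Fin n → ZMod 2) → ZMod 2

/-- The coefficient, in the algebraic normal form of `f`, of the monomial whose
set of variables is `S` (computed by the Möbius/binary Möbius transform). -/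
def anf {n : ℕ} (f : BF n) (S : Finset (Fin n)) : ZMod 2 :=
  ∑ T ∈ S.powerset, f (fun i => if i ∈ T then 1 else 0)

/-- The algebraic degree of a Boolean function, with `⊥` (i.e. `-∞`) for the zero function. -/
def degB {n : ℕ} (f : BF n) : WithBot ℕ :=
  (Finset.univ.filter (fun S : Finset (Fin n) => anf f S ≠ 0)).sup
    (fun S => (S.card : WithBot ℕ))

/-- `f` is homogeneous of degree `r`: all monomials of its ANF have degree `r`. -/
def Homog {n : ℕ} (f : BF n) (r : ℕ) : Prop :=
  ∀ S : Finset (Fin n), anf f S ≠ 0 → S.card = r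

/-- `φ` is an affine map. -/
def IsAffineMap {n m : ℕ} (φ : (Fin m → ZMod 2) → (Fin n → ZMod 2)) : Prop :=
  ∃ (L : (Fin m → ZMod 2) →ₗ[ZMod 2] (Fin n → ZMod 2)) (b : Fin n → ZMod 2),
    φ = fun x => L x + b

/-- `A` is a degree-drop affine subspace of co-dimension `k` for `f` : `A` is the range of an
injective affine parametrization `φ` defined on `F_2^{n-k}`, and the restriction `f|_A`,
viewed as the Boolean function `f ∘ φ` in `n-k` variables, has degree `< deg f`. -/
def DegreeDropSet {n : ℕ} (f : BF n) (k : ℕ) (A : Set (Fin n → ZMod 2)) : Prop :=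
  ∃ φ : (Fin (n - k) → ZMod 2) → (Fin n → ZMod 2),
    IsAffineMap φ ∧ Function.Injective φ ∧ Set.range φ = A ∧ degB (f ∘ φ) < degB f

/-- `f` has some degree-drop affine subspace of co-dimension `k`. -/
def HasDDS {n : ℕ} (f : BF n) (k : ℕ) : Prop :=
  ∃ A : Set (Fin n → ZMod 2), DegreeDropSet f k A

/-- `SimEq r f g` is the relation `f ∼_{r-1} g` : there are an invertible affine
transformation `x ↦ L x + b` of `F_2^n` and a Boolean function `h` of degree at most `r-1`
such that `g = f ∘ φ + h`. -/
def SimEq {n : ℕ} (r : ℕ) (f g : BF n) : Prop :=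
  ∃ (L : (Fin n → ZMod 2) ≃ₗ[ZMod 2] (Fin n → ZMod 2)) (b : Fin n → ZMod 2) (h : BF n),
    degB h ≤ ((r - 1 : ℕ) : WithBot ℕ) ∧ g = fun x => f (L x + b) + h x

/-- The complement `f^c` of a (homogeneous) Boolean function: each monomial `m` of the ANF
is replaced by the monomial on the complementary set of variables. -/
def bcompl {n : ℕ} (f : BF n) : BF n :=
  fun x => ∑ S ∈ Finset.univ.filter (fun S : Finset (Fin n) => anf f S ≠ 0), ∏ i ∈ Sᶜ, x i

/-- Discrete derivative of `f` in direction `a`. -/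
def deriv1 {n : ℕ} (a : Fin n → ZMod 2) (f : BF n) : BF n :=
  fun x => f (x + a) + f x

/-- `a` is a fast point of `f` : `a ≠ 0` and `deg (D_a f) < deg f - 1`. -/
def FastPoint {n : ℕ} (f : BF n) (a : Fin n → ZMod 2) : Prop :=
  a ≠ 0 ∧ degB (deriv1 a f) + 1 < degB f

/-- Membership in `K_{k,r,n}` : `f` is a nonzero homogeneous Boolean function of degree `r`
in `n` variables with no degree-drop affine subspace of co-dimension `k`. -/
def memK {n : ℕ} (k r : ℕ) (f : BF n) : Prop :=
  Homog f r ∧ degB f = (r : WithBot ℕ) ∧ ¬ HasDDS f k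

/-- The restriction degree stability of `f` : the largest `k` such that `f` has no
degree-drop affine subspace of co-dimension `k`. -/
noncomputable def degStab {n : ℕ} (f : BF n) : ℕ :=
  sSup {k : ℕ | ¬ HasDDS f k}

/-- `deg_stab(r,n)` : the maximum of `degStab f` over all Boolean functions `f` of
degree `r` in `n` variables. -/
noncomputable def degStabRN (r n : ℕ) : ℕ :=
  sSup {d : ℕ | ∃ f : BF n, degB f = (r : WithBot ℕ) ∧ d = degStab f}

/-- `g` depends only on the variables in `S`. -/
def DependsOnlyOn {n : ℕ} (g : BF n) (S : Finset (Fin n)) : Prop :=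
  ∀ x y : Fin n → ZMod 2, (∀ i ∈ S, x i = y i) → g x = g y

/-- `rank_{r-1}(f)` : the minimum `m` such that some Boolean function `g` depending on only
`m` of the variables satisfies `f ∼_{r-1} g`. -/
noncomputable def rankB {n : ℕ} (r : ℕ) (f : BF n) : ℕ :=
  sInf {m : ℕ | ∃ g : BF n, SimEq r f g ∧
    ∃ S : Finset (Fin n), S.card = m ∧ DependsOnlyOn g S}

/-- Iterated discrete derivative `D_{a_1}(D_{a_2}(⋯ D_{a_k} f))` along a list of directions. -/
def derivList {n : ℕ} : List (Fin n → ZMod 2) → BF n → BF n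
  | [], f => f
  | a :: l, f => deriv1 a (derivList l f)

section ANF

variable {n : ℕ}

def indVec (T : Finset (Fin n)) : Fin n → ZMod 2 := fun i => if i ∈ T then 1 else 0

def monomial (S : Finset (Fin n)) : BF n := fun x => ∏ i ∈ S, x i

def ofANF (c : Finset (Fin n) → ZMod 2) : BF n := fun x => ∑ S, c S * monomial S x

lemma anf_eq_sum_indVec (f : BF n) (S : Finset (Fin n)) :
    anf f S = ∑ T ∈ S.powerset, f (indVec T) := rfl

lemma anf_add (f g : BF n) (S : Finset (Fin n)) :
    anf (fun x => f x + g x) S = anf f S + anf g S :=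
  Finset.sum_add_distrib

lemma anf_const_mul (c : ZMod 2) (f : BF n) (S : Finset (Fin n)) :
    anf (fun x => c * f x) S = c * anf f S :=
  (Finset.mul_sum _ _ _).symm

lemma anf_sum {ι : Type*} (s : Finset ι) (F : ι → BF n) (S : Finset (Fin n)) :
    anf (fun x => ∑ k ∈ s, F k x) S = ∑ k ∈ s, anf (F k) S :=
  Finset.sum_comm

lemma monomial_indVec (S T : Finset (Fin n)) :
    monomial S (indVec T) = if S ⊆ T then 1 else 0 :=
  Finset.prod_boole

lemma natCast_two_pow_zmod_two (k : ℕ) : ((2 ^ k : ℕ) : ZMod 2) = if k = 0 then 1 else 0 := by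
  rcases k with _ | k
  · simp
  · simp [pow_succ, CharTwo.two_eq_zero]

-- Möbius inversion: the number `2 ^ (|T| - |S|)` of sets between `S ⊆ T` is odd only
-- for `S = T`.
lemma anf_monomial (S T : Finset (Fin n)) : anf (monomial S) T = if S = T then 1 else 0 := by
  simp only [anf_eq_sum_indVec, monomial_indVec, Finset.sum_boole,
    ← Finset.Icc_eq_filter_powerset]
  by_cases hST : S ⊆ T
  · rw [Finset.card_Icc_finset hST, natCast_two_pow_zmod_two]
    exact if_congr
      ⟨fun h => Finset.eq_of_subset_of_card_le hST (by omega), fun h => by simp [h]⟩ rfl rfl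
  · rw [Finset.Icc_eq_empty (by simpa using hST)]
    simp [show S ≠ T by rintro rfl; exact hST le_rfl]

lemma anf_ofANF (c : Finset (Fin n) → ZMod 2) : anf (ofANF c) = c := by
  funext T
  change anf (fun x => ∑ S, c S * monomial S x) T = c T
  simp only [anf_sum, anf_const_mul, anf_monomial, mul_ite, mul_one, mul_zero,
    Finset.sum_ite_eq', Finset.mem_univ, if_true]

lemma ofANF_anf (f : BF n) : ofANF (anf f) = f := by
  have hbij : Function.Bijective (ofANF : (Finset (Fin n) → ZMod 2) → BF n) := by
    rw [Fintype.bijective_iff_injective_and_card]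
    exact ⟨Function.LeftInverse.injective anf_ofANF, by simp⟩
  obtain ⟨c, rfl⟩ := hbij.2 f
  rw [anf_ofANF]

end ANF

section Degree

variable {n : ℕ}

lemma degB_le_iff (f : BF n) (d : WithBot ℕ) :
    degB f ≤ d ↔ ∀ S, anf f S ≠ 0 → (S.card : WithBot ℕ) ≤ d := by
  simp [degB, Finset.sup_le_iff]

lemma degB_lt_iff (f : BF n) (d : ℕ) :
    degB f < d ↔ ∀ S : Finset (Fin n), d ≤ S.card → anf f S = 0 := by
  rw [degB, Finset.sup_lt_iff (by exact_mod_cast WithBot.bot_lt_coe d)]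
  simp only [Finset.mem_filter, Finset.mem_univ, true_and, ← not_le, Nat.cast_le]
  exact forall_congr' fun S => not_imp_not

lemma degB_add_one_lt_iff (f : BF n) (d : ℕ) :
    degB f + 1 < d ↔ ∀ S : Finset (Fin n), d ≤ S.card + 1 → anf f S = 0 := by
  have hsup : degB f + 1 = (Finset.univ.filter fun S => anf f S ≠ 0).sup
      fun S : Finset (Fin n) => ((S.card + 1 : ℕ) : WithBot ℕ) := by
    rw [degB, Finset.apply_sup_eq_sup_comp (· + 1) (fun x y => (max_add_add_right x y 1).symm)
      (WithBot.bot_add 1)]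
    rfl
  rw [hsup, Finset.sup_lt_iff (by exact_mod_cast WithBot.bot_lt_coe d)]
  simp only [Finset.mem_filter, Finset.mem_univ, true_and, ← not_le, Nat.cast_le]
  exact forall_congr' fun S => not_imp_not

lemma degB_eq_of_homog {f : BF n} {d : ℕ} (hf : Homog f d) {S : Finset (Fin n)}
    (hS : anf f S ≠ 0) : degB f = d := by
  refine le_antisymm ((degB_le_iff f d).2 fun T hT => by rw [hf T hT]) ?_
  rw [← hf S hS]
  exact Finset.le_sup (f := fun S : Finset (Fin n) => (S.card : WithBot ℕ)) (by simpa using hS)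

lemma exists_anf_ne_zero {f : BF n} {d : ℕ} (hf : degB f = d) : ∃ S, anf f S ≠ 0 := by
  by_contra! h
  have := (degB_lt_iff f 0).2 fun S _ => h S
  simp [hf] at this

lemma anf_deriv1 (a : Fin n → ZMod 2) (f : BF n) (V : Finset (Fin n)) :
    anf (deriv1 a f) V =
      ∑ U ∈ Finset.univ.filter (V ⊂ ·), anf f U * ∏ i ∈ U \ V, a i := by
  suffices deriv1 a f = ofANF fun V =>
      ∑ U ∈ Finset.univ.filter (V ⊂ ·), anf f U * ∏ i ∈ U \ V, a i by
    rw [this, anf_ofANF]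
  funext x
  have hmon : ∀ U : Finset (Fin n), monomial U (x + a) + monomial U x
      = ∑ V ∈ U.powerset.erase U, monomial V x * ∏ i ∈ U \ V, a i := by
    intro U
    simp only [monomial, Pi.add_apply]
    rw [Finset.prod_add, ← Finset.sum_erase_add _ _ (Finset.mem_powerset_self U),
      Finset.sdiff_self, Finset.prod_empty, mul_one, add_assoc, CharTwo.add_self_eq_zero,
      add_zero]
  rw [deriv1, ← ofANF_anf f]
  calc ∑ U, anf f U * monomial U (x + a) + ∑ U, anf f U * monomial U x
      = ∑ U, ∑ V ∈ U.powerset.erase U, anf f U * (monomial V x * ∏ i ∈ U \ V, a i) := by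
        simp only [← Finset.sum_add_distrib, ← mul_add, hmon, Finset.mul_sum]
    _ = ∑ V, ∑ U ∈ Finset.univ.filter (V ⊂ ·),
          anf f U * (monomial V x * ∏ i ∈ U \ V, a i) := by
        apply Finset.sum_comm'
        simp [Finset.ssubset_iff_subset_ne, and_comm]
    _ = _ := by
        simp only [ofANF, anf_ofANF, Finset.sum_mul]
        exact Finset.sum_congr rfl fun V _ => Finset.sum_congr rfl fun U _ => by ring

end Degree

section Affine

variable {n : ℕ}

lemma anf_deriv1_eq_zero {a : Fin n → ZMod 2} {f : BF n} {d : ℕ}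
    (hf : ∀ S : Finset (Fin n), d + 1 ≤ S.card → anf f S = 0)
    {S : Finset (Fin n)} (hS : d ≤ S.card) : anf (deriv1 a f) S = 0 := by
  rw [anf_deriv1]
  refine Finset.sum_eq_zero fun U hU => ?_
  have hSU := Finset.card_lt_card (Finset.mem_filter.1 hU).2
  rw [hf U (by omega), zero_mul]

-- Each direction of the cube is a derivative, and each derivative lowers the degree.
lemma sum_cube_eq_zero {ι : Type*} [DecidableEq ι] (s : Finset ι) (f : BF n)
    (hf : ∀ S : Finset (Fin n), s.card ≤ S.card → anf f S = 0)
    (e : ι → Fin n → ZMod 2) (u : Fin n → ZMod 2) :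
    ∑ T ∈ s.powerset, f (u + ∑ i ∈ T, e i) = 0 := by
  induction s using Finset.induction_on generalizing f with
  | empty =>
    have hf0 : f = ofANF 0 := by rw [← ofANF_anf f, funext fun S => hf S (Nat.zero_le _)]; rfl
    simp [hf0, ofANF]
  | @insert i s hi ih =>
    rw [Finset.sum_powerset_insert hi, ← Finset.sum_add_distrib]
    have hstep : ∀ T ∈ s.powerset, f (u + ∑ k ∈ T, e k) + f (u + ∑ k ∈ insert i T, e k)
        = deriv1 (e i) f (u + ∑ k ∈ T, e k) := by
      intro T hT
      rw [Finset.sum_insert fun h => hi (Finset.mem_powerset.1 hT h), deriv1, add_comm]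
      congr 2
      abel
    rw [Finset.sum_congr rfl hstep]
    rw [Finset.card_insert_of_notMem hi] at hf
    exact ih _ fun S hS => anf_deriv1_eq_zero hf hS

lemma indVec_eq_sum (T : Finset (Fin n)) : indVec T = ∑ i ∈ T, Pi.single i 1 := by
  funext k
  simp [indVec, Finset.sum_apply, Finset.sum_pi_single]

lemma IsAffineMap.anf_comp_eq_zero {m : ℕ} {φ : (Fin m → ZMod 2) → (Fin n → ZMod 2)}
    (hφ : IsAffineMap φ)
    {f : BF n} {d : ℕ} (hf : ∀ S : Finset (Fin n), d ≤ S.card → anf f S = 0)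
    {S : Finset (Fin m)} (hS : d ≤ S.card) : anf (f ∘ φ) S = 0 := by
  obtain ⟨L, b, rfl⟩ := hφ
  rw [anf_eq_sum_indVec]
  simp only [Function.comp_apply, indVec_eq_sum, map_sum, add_comm _ b]
  exact sum_cube_eq_zero S f (fun U hU => hf U (hS.trans hU)) _ b

lemma IsAffineMap.degB_comp_le {m : ℕ} {φ : (Fin m → ZMod 2) → (Fin n → ZMod 2)}
    (hφ : IsAffineMap φ)
    (f : BF n) : degB (f ∘ φ) ≤ degB f := by
  refine le_of_forall_gt fun d hd => ?_
  induction d using WithBot.recBotCoe with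
  | bot => exact absurd hd not_lt_bot
  | coe d =>
    rw [← Nat.cast_withBot, degB_lt_iff] at hd ⊢
    exact fun S hS => hφ.anf_comp_eq_zero hd hS

lemma IsAffineMap.exists_eq_comp {m k : ℕ} {φ : (Fin m → ZMod 2) → (Fin n → ZMod 2)}
    {ψ : (Fin k → ZMod 2) → (Fin n → ZMod 2)} (hφ : IsAffineMap φ) (hψ : IsAffineMap ψ)
    (hψinj : Function.Injective ψ) (hrange : Set.range φ ⊆ Set.range ψ) :
    ∃ β, IsAffineMap β ∧ φ = ψ ∘ β := by
  obtain ⟨L, b, rfl⟩ := hψ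
  obtain ⟨M, c, rfl⟩ := hφ
  have hL : LinearMap.ker L = ⊥ :=
    LinearMap.ker_eq_bot.2 fun x y h => hψinj (by simp only [h])
  obtain ⟨L', hL'⟩ := L.exists_leftInverse_of_injective hL
  refine ⟨fun y => L' (M y) + L' (c - b), ⟨L' ∘ₗ M, L' (c - b), rfl⟩,
    funext fun y => ?_⟩
  obtain ⟨x, hx⟩ := hrange ⟨y, rfl⟩
  replace hx : M y + c - b = L x := by simp only at hx; rw [← hx]; abel
  show M y + c = L (L' (M y) + L' (c - b)) + b
  have hLx : L' (L x) = x := LinearMap.congr_fun hL' x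
  rw [← map_add, ← add_sub_assoc, hx, hLx, ← hx, sub_add_cancel]

lemma degreeDropSet_iff {k : ℕ} {f : BF n} {A : Set (Fin n → ZMod 2)}
    {φ : (Fin (n - k) → ZMod 2) → (Fin n → ZMod 2)} (hφ : IsAffineMap φ)
    (hφinj : Function.Injective φ) (hφA : Set.range φ = A) :
    DegreeDropSet f k A ↔ degB (f ∘ φ) < degB f := by
  refine ⟨fun ⟨ψ, hψ, hψinj, hψA, hdrop⟩ => ?_, fun h => ⟨φ, hφ, hφinj, hφA, h⟩⟩
  obtain ⟨β, hβ, rfl⟩ := hφ.exists_eq_comp hψ hψinj (hφA.trans hψA.symm).le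
  exact (hβ.degB_comp_le (f ∘ ψ)).trans_lt hdrop

end Affine

section LinearMulCoeff

variable {n : ℕ}

-- For `f` homogeneous of degree `|W| - 1`, this is the coefficient of `x^W` in `(a · x) f`.
def linearMulCoeff (f : BF n) (a : Fin n → ZMod 2) (W : Finset (Fin n)) : ZMod 2 :=
  ∑ i ∈ W, a i * anf f (W.erase i)

lemma sum_sum_erase_eq_zero_of_symm {ι R : Type*} [DecidableEq ι] [Ring R] [CharP R 2]
    (W : Finset ι) (F : ι → ι → R) (hF : ∀ k i, F k i = F i k) :
    ∑ k ∈ W, ∑ i ∈ W.erase k, F k i = 0 := by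
  induction W using Finset.induction_on with
  | empty => simp
  | @insert w W hw ih =>
    have hsplit : ∀ k ∈ W,
        ∑ i ∈ (insert w W).erase k, F k i = F k w + ∑ i ∈ W.erase k, F k i := by
      intro k hk
      rw [Finset.erase_insert_of_ne (by rintro rfl; exact hw hk),
        Finset.sum_insert fun h => hw (Finset.mem_of_mem_erase h)]
    rw [Finset.sum_insert hw, Finset.erase_insert hw, Finset.sum_congr rfl hsplit,
      Finset.sum_add_distrib, ih, add_zero, Finset.sum_congr rfl fun k _ => hF k w,
      CharTwo.add_self_eq_zero]

variable {f : BF n} {a : Fin n → ZMod 2} {j : Fin n}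

-- The cross terms `a k * a i * anf f (insert j (W \ {k, i}))` cancel in pairs.
lemma linearMulCoeff_eq_sum_insert (ha : a j = 1) {W : Finset (Fin n)} (hj : j ∉ W) :
    linearMulCoeff f a W = ∑ k ∈ W, a k * linearMulCoeff f a (insert j (W.erase k)) := by
  have hexpand : ∀ k ∈ W, a k * linearMulCoeff f a (insert j (W.erase k))
      = a k * anf f (W.erase k)
        + ∑ i ∈ W.erase k, a k * a i * anf f (insert j ((W.erase k).erase i)) := by
    intro k _
    have hjk : j ∉ W.erase k := fun h => hj (Finset.mem_of_mem_erase h)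
    rw [linearMulCoeff, Finset.sum_insert hjk, Finset.erase_insert hjk, ha, one_mul, mul_add,
      Finset.mul_sum]
    congr 1
    refine Finset.sum_congr rfl fun i hi => ?_
    rw [Finset.erase_insert_of_ne (by rintro rfl; exact hjk hi), mul_assoc]
  rw [Finset.sum_congr rfl hexpand, Finset.sum_add_distrib,
    sum_sum_erase_eq_zero_of_symm W _ fun k i => by rw [Finset.erase_right_comm, mul_comm (a k)],
    add_zero, linearMulCoeff]

lemma linearMulCoeff_eq_zero_iff_of_mem (ha : a j = 1) (d : ℕ) :
    (∀ W : Finset (Fin n), W.card = d → j ∈ W → linearMulCoeff f a W = 0) ↔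
      ∀ W : Finset (Fin n), W.card = d → linearMulCoeff f a W = 0 := by
  refine ⟨fun h W hW => ?_, fun h W hW _ => h W hW⟩
  by_cases hj : j ∈ W
  · exact h W hW hj
  rw [linearMulCoeff_eq_sum_insert ha hj]
  refine Finset.sum_eq_zero fun k hk => ?_
  rw [h _ ?_ (Finset.mem_insert_self j _), mul_zero]
  rw [Finset.card_insert_of_notMem fun h => hj (Finset.mem_of_mem_erase h),
    Finset.card_erase_add_one hk, hW]

end LinearMulCoeff

section FastPoint

variable {n : ℕ}

lemma anf_bcompl (f : BF n) (T : Finset (Fin n)) : anf (bcompl f) T = anf f Tᶜ := by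
  suffices bcompl f = ofANF fun T => anf f Tᶜ by rw [this, anf_ofANF]
  funext x
  have hcoeff : ∀ c : ZMod 2, (if c ≠ 0 then 1 else 0) = c := by decide
  rw [bcompl, Finset.sum_filter, ofANF,
    ← (Equiv.mk compl compl compl_compl compl_compl).sum_comp]
  refine Finset.sum_congr rfl fun S _ => ?_
  simp only [Equiv.coe_fn_mk, compl_compl]
  rw [← boole_mul, hcoeff]
  rfl

lemma Homog.bcompl {f : BF n} {r : ℕ} (hf : Homog f r) : Homog (bcompl f) (n - r) := by
  intro T hT
  rw [anf_bcompl] at hT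
  have := hf _ hT
  have := T.card_compl_add_card
  rw [Fintype.card_fin] at this
  omega

lemma anf_deriv1_of_homog {f : BF n} {d : ℕ} (hf : Homog f d) (a : Fin n → ZMod 2)
    {V : Finset (Fin n)} (hV : V.card + 1 = d) :
    anf (deriv1 a f) V = ∑ i ∈ Vᶜ, a i * anf f (insert i V) := by
  rw [anf_deriv1]
  symm
  refine Finset.sum_bij_ne_zero (fun i _ _ => insert i V) ?_ ?_ ?_ ?_
  · intro i hi _
    simpa using Finset.ssubset_insert (Finset.mem_compl.1 hi)
  · intro i hi _ k hk _ h
    rcases Finset.mem_insert.1 (h ▸ Finset.mem_insert_self i V) with h | h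
    · exact h
    · exact absurd h (Finset.mem_compl.1 hi)
  · intro U hU hne
    have hVU := (Finset.mem_filter.1 hU).2
    have hUcard := hf U (left_ne_zero_of_mul hne)
    obtain ⟨i, hiU, hiV⟩ := Finset.exists_of_ssubset hVU
    obtain rfl : insert i V = U := Finset.eq_of_subset_of_card_le
      (Finset.insert_subset hiU hVU.subset) (by rw [Finset.card_insert_of_notMem hiV]; omega)
    rw [Finset.insert_sdiff_cancel hiV, Finset.prod_singleton, mul_comm] at hne
    exact ⟨i, Finset.mem_compl.2 hiV, hne, rfl⟩
  · intro i hi _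
    rw [Finset.insert_sdiff_cancel (Finset.mem_compl.1 hi), Finset.prod_singleton, mul_comm]

lemma anf_deriv1_bcompl {f : BF n} {r : ℕ} (hf : Homog f r) (a : Fin n → ZMod 2)
    {V : Finset (Fin n)} (hV : V.card + 1 = n - r) :
    anf (deriv1 a (bcompl f)) V = linearMulCoeff f a Vᶜ := by
  rw [anf_deriv1_of_homog hf.bcompl a hV, linearMulCoeff]
  simp only [anf_bcompl, Finset.compl_insert]

lemma fastPoint_bcompl_iff {f : BF n} {r : ℕ} (hf : Homog f r) {S : Finset (Fin n)}
    (hS : anf f S ≠ 0) {a : Fin n → ZMod 2} (ha : a ≠ 0) :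
    FastPoint (bcompl f) a ↔
      ∀ W : Finset (Fin n), W.card = r + 1 → linearMulCoeff f a W = 0 := by
  have hdeg : degB (bcompl f) = (n - r : ℕ) :=
    degB_eq_of_homog hf.bcompl (S := Sᶜ) (by rwa [anf_bcompl, compl_compl])
  have hcard (T : Finset (Fin n)) : Tᶜ.card + T.card = n := by simp
  have hr : r ≤ n := by have := hcard S; have := hf S hS; omega
  rw [FastPoint, hdeg, degB_add_one_lt_iff, and_iff_right ha]
  refine ⟨fun h W hW => ?_, fun h V hV => ?_⟩
  · have := hcard W
    rw [← compl_compl W, ← anf_deriv1_bcompl hf a (by omega)]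
    exact h _ (by omega)
  · rcases Nat.lt_or_ge V.card (n - r) with hlt | hge
    · have := hcard V
      rw [anf_deriv1_bcompl hf a (by omega)]
      exact h _ (by omega)
    · exact anf_deriv1_eq_zero (fun U hU => by_contra fun h => by
        have := hf.bcompl U h; omega) hge

end FastPoint

section Hyperplane

variable {m : ℕ} (j : Fin (m + 1)) (a : Fin (m + 1) → ZMod 2)

-- For `a j = 1`, this solves `a · x = 0` for the coordinate `x j`.
def hyperplaneParam : (Fin m → ZMod 2) →ₗ[ZMod 2] (Fin (m + 1) → ZMod 2) where
  toFun y := j.insertNth (∑ k, a (j.succAbove k) * y k) y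
  map_add' y z := by simp [mul_add, Finset.sum_add_distrib, ← Fin.insertNth_add]
  map_smul' c y := by
    ext i
    induction i using Fin.succAboveCases j <;> simp [Finset.mul_sum, mul_left_comm]

@[simp]
lemma hyperplaneParam_apply_self (y : Fin m → ZMod 2) :
    hyperplaneParam j a y j = ∑ k, a (j.succAbove k) * y k := by
  simp [hyperplaneParam]

@[simp]
lemma hyperplaneParam_apply_succAbove (y : Fin m → ZMod 2) (k : Fin m) :
    hyperplaneParam j a y (j.succAbove k) = y k := by
  simp [hyperplaneParam]

lemma isAffineMap_hyperplaneParam : IsAffineMap (hyperplaneParam j a) :=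
  ⟨hyperplaneParam j a, 0, by simp⟩

lemma hyperplaneParam_injective : Function.Injective (hyperplaneParam j a) := fun y z h =>
  funext fun k => by
    rw [← hyperplaneParam_apply_succAbove j a y, h, hyperplaneParam_apply_succAbove]

lemma range_hyperplaneParam (ha : a j = 1) :
    Set.range (hyperplaneParam j a) = {x | ∑ i, a i * x i = 0} := by
  ext x
  simp only [Set.mem_range, Set.mem_ofPred_eq, Fin.sum_univ_succAbove _ j, ha, one_mul]
  constructor
  · rintro ⟨y, rfl⟩
    simp [CharTwo.add_self_eq_zero]
  · intro hx
    rw [CharTwo.add_eq_iff_eq_add, zero_add] at hx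
    exact ⟨j.removeNth x, Fin.insertNth_eq_iff.2 ⟨by simp [Fin.removeNth, hx], rfl⟩⟩

lemma sum_finset_fin_succAbove {R : Type*} [AddCommMonoid R] (G : Finset (Fin (m + 1)) → R) :
    ∑ U, G U = ∑ T : Finset (Fin m),
      (G (T.image j.succAbove) + G (insert j (T.image j.succAbove))) := by
  have hinj : Set.InjOn (fun T : Finset (Fin m) => T.image j.succAbove)
      ↑(Finset.univ : Finset (Fin m)).powerset :=
    fun _ _ _ _ h => Finset.image_injective Fin.succAbove_right_injective h
  rw [← Finset.powerset_univ, ← Finset.insert_compl_self j,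
    Finset.sum_powerset_insert (Finset.notMem_compl.2 (Finset.mem_singleton_self j)),
    ← Finset.sum_add_distrib, ← Fin.image_succAbove_univ, Finset.powerset_image,
    Finset.sum_image hinj, Finset.powerset_univ]

lemma monomial_image_succAbove (T : Finset (Fin m)) (y : Fin m → ZMod 2) :
    monomial (T.image j.succAbove) (hyperplaneParam j a y) = monomial T y := by
  simp [monomial, Finset.prod_image fun _ _ _ _ h => Fin.succAbove_right_injective h]

lemma mul_monomial (k : Fin m) (T : Finset (Fin m)) (y : Fin m → ZMod 2) :
    y k * monomial T y = monomial (insert k T) y := by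
  by_cases hk : k ∈ T
  · rw [Finset.insert_eq_self.2 hk, monomial, ← Finset.mul_prod_erase T y hk, ← mul_assoc,
      show y k * y k = y k by generalize y k = c; revert c; decide]
  · rw [monomial, monomial, Finset.prod_insert hk]

lemma monomial_insert_image_succAbove (T : Finset (Fin m)) (y : Fin m → ZMod 2) :
    monomial (insert j (T.image j.succAbove)) (hyperplaneParam j a y)
      = ∑ k, a (j.succAbove k) * monomial (insert k T) y := by
  rw [monomial, Finset.prod_insert (by simp [Fin.succAbove_ne]), ← monomial,
    monomial_image_succAbove, hyperplaneParam_apply_self, Finset.sum_mul]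
  simp only [mul_assoc, mul_monomial]

lemma sum_mul_ite_insert_eq {g : Finset (Fin m) → ZMod 2} {S : Finset (Fin m)}
    (hg : ∀ T, g T ≠ 0 → T.card + 1 = S.card) (k : Fin m) :
    ∑ T, g T * (if insert k T = S then 1 else 0) = if k ∈ S then g (S.erase k) else 0 := by
  split_ifs with hk
  · rw [Finset.sum_eq_single (S.erase k), Finset.insert_erase hk, if_pos rfl, mul_one]
    · intro T _ hT
      rw [mul_eq_zero, or_iff_not_imp_left]
      intro hgT
      rw [if_neg]
      rintro rfl
      have hkT : k ∉ T := fun h => by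
        have := hg T hgT; rw [Finset.insert_eq_self.2 h] at this; omega
      exact hT (Finset.erase_insert hkT).symm
    · simp
  · refine Finset.sum_eq_zero fun T _ => ?_
    rw [if_neg (by rintro rfl; exact hk (Finset.mem_insert_self k T)), mul_zero]

variable {a}

lemma anf_comp_hyperplaneParam {f : BF (m + 1)} {r : ℕ} (hf : Homog f r) (ha : a j = 1)
    {S : Finset (Fin m)} (hS : S.card = r) :
    anf (f ∘ hyperplaneParam j a) S = linearMulCoeff f a (insert j (S.image j.succAbove)) := by
  have hexpand : f ∘ hyperplaneParam j a = fun y => ∑ T, (anf f (T.image j.succAbove)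
      * monomial T y + ∑ k, anf f (insert j (T.image j.succAbove)) * a (j.succAbove k)
        * monomial (insert k T) y) := by
    funext y
    conv_lhs => rw [Function.comp_apply, ← ofANF_anf f]
    rw [ofANF, sum_finset_fin_succAbove j]
    simp only [monomial_image_succAbove, monomial_insert_image_succAbove, Finset.mul_sum, mul_assoc]
  have hcard : ∀ T : Finset (Fin m), anf f (insert j (T.image j.succAbove)) ≠ 0 →
      T.card + 1 = S.card := fun T hT => by
    have := hf _ hT
    rwa [Finset.card_insert_of_notMem (by simp [Fin.succAbove_ne]),
      Finset.card_image_of_injective _ Fin.succAbove_right_injective, ← hS] at this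
  have hj : j ∉ S.image j.succAbove := by simp [Fin.succAbove_ne]
  rw [hexpand, linearMulCoeff, Finset.sum_insert hj, ha, one_mul, Finset.erase_insert hj,
    Finset.sum_image fun _ _ _ _ h => Fin.succAbove_right_injective h]
  simp only [anf_sum, anf_add, anf_const_mul, anf_monomial]
  rw [Finset.sum_add_distrib]
  congr 1
  · simp
  · rw [Finset.sum_comm]
    simp only [sum_mul_ite_insert_eq fun T hT => hcard T (left_ne_zero_of_mul hT)]
    rw [Finset.sum_ite_mem, Finset.univ_inter]
    refine Finset.sum_congr rfl fun k _ => ?_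
    rw [Finset.erase_insert_of_ne (Fin.succAbove_ne j k).symm,
      ← Finset.image_erase Fin.succAbove_right_injective, mul_comm]

lemma degreeDropSet_hyperplane_iff {f : BF (m + 1)} {r : ℕ} (hf : Homog f r)
    (hdeg : degB f = r) (ha : a j = 1) :
    DegreeDropSet f 1 {x | ∑ i, a i * x i = 0} ↔
      ∀ W : Finset (Fin (m + 1)), W.card = r + 1 → j ∈ W → linearMulCoeff f a W = 0 := by
  rw [degreeDropSet_iff (φ := hyperplaneParam j a) (isAffineMap_hyperplaneParam j a)
    (hyperplaneParam_injective j a) (range_hyperplaneParam j a ha), hdeg, degB_lt_iff]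
  constructor
  · intro h W hW hjW
    have hWj : W.erase j ⊆ Finset.univ.image j.succAbove := by
      rw [Fin.image_succAbove_univ]
      exact fun i hi => by simpa using Finset.ne_of_mem_erase hi
    obtain ⟨S, -, hS⟩ := Finset.subset_image_iff.1 hWj
    have hScard : S.card = r := by
      rw [← Finset.card_image_of_injective S Fin.succAbove_right_injective, hS,
        Finset.card_erase_of_mem hjW, hW, Nat.add_sub_cancel]
    rw [← Finset.insert_erase hjW, ← hS, ← anf_comp_hyperplaneParam j hf ha hScard]
    exact h S hScard.ge
  · intro h S hS
    rcases hS.eq_or_lt with hS | hS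
    · rw [anf_comp_hyperplaneParam j hf ha hS.symm]
      refine h _ ?_ (Finset.mem_insert_self j _)
      rw [Finset.card_insert_of_notMem (by simp [Fin.succAbove_ne]),
        Finset.card_image_of_injective S Fin.succAbove_right_injective, hS]
    · exact (isAffineMap_hyperplaneParam j a).anf_comp_eq_zero
        (fun U hU => by_contra fun hne => by have := hf U hne; omega) hS

end Hyperplane

theorem stmt17_general {n r : ℕ}
    (f : BF n) (hhom : Homog f r) (hdeg : degB f = (r : WithBot ℕ)) :
    (∀ a : Fin n → ZMod 2, a ≠ 0 →
      (DegreeDropSet f 1 {x | ∑ i, a i * x i = 0} ↔ FastPoint (bcompl f) a)) ∧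
    Nat.card {a : Fin n → ZMod 2 //
        a ≠ 0 ∧ DegreeDropSet f 1 {x | ∑ i, a i * x i = 0}}
      = Nat.card {a : Fin n → ZMod 2 // FastPoint (bcompl f) a} := by
  have key : ∀ a : Fin n → ZMod 2, a ≠ 0 →
      (DegreeDropSet f 1 {x | ∑ i, a i * x i = 0} ↔ FastPoint (bcompl f) a) := by
    intro a ha
    obtain ⟨S, hS⟩ := exists_anf_ne_zero hdeg
    rcases n with _ | m
    · exact absurd (Subsingleton.elim a 0) ha
    obtain ⟨j, hj⟩ := Function.ne_iff.1 ha
    rw [degreeDropSet_hyperplane_iff j hhom hdeg (Fin.eq_one_of_ne_zero _ hj),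
      linearMulCoeff_eq_zero_iff_of_mem (Fin.eq_one_of_ne_zero _ hj),
      fastPoint_bcompl_iff hhom hS ha]
  refine ⟨key, Nat.card_congr (Equiv.subtypeEquivRight fun a => ?_)⟩
  exact ⟨fun h => (key a h.1).1 h.2, fun h => ⟨h.1, (key a h.1).2 h⟩⟩

/-- STATEMENT 17: for a homogeneous `f` of degree `r` with `1 ≤ r ≤ n-1` and nonzero `a`,
the linear hyperplane `{x | a·x = 0}` is a degree-drop hyperplane for `f` iff `a` is a fast
point for `f^c`; consequently the number of degree-drop linear hyperplanes of `f` equals the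
number of fast points of `f^c`. -/
theorem stmt17 {n r : ℕ} (hr1 : 1 ≤ r) (hrn : r ≤ n - 1)
    (f : BF n) (hhom : Homog f r) (hdeg : degB f = (r : WithBot ℕ)) :
    (∀ a : Fin n → ZMod 2, a ≠ 0 →
      (DegreeDropSet f 1 {x | ∑ i, a i * x i = 0} ↔ FastPoint (bcompl f) a)) ∧
    Nat.card {a : Fin n → ZMod 2 //
        a ≠ 0 ∧ DegreeDropSet f 1 {x | ∑ i, a i * x i = 0}}
      = Nat.card {a : Fin n → ZMod 2 // FastPoint (bcompl f) a} :=
  stmt17_general f hhom hdeg
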